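/- arXiv:2403.02690 — 3 statements merged into one kernel-verified Lean document; each statement's English description precedes it below -/
import Mathlib

section
/- Let Ω be a nonempty finite type, let p̃ and p be probability mass functions on Ω with p̃(ω) > 0 for every ω ∈ Ω, let l : Ω → ℝ, and let (W_i)_{i∈ℕ} be an i.i.d. sequence of Ω-valued random variables on a probability space, each distributed according to p̃. Then, almost surely, the self-normalized importance-weighted empirical risk (Σ_{i<N} (p(W_i)/p̃(W_i)) · l(W_i)) / (Σ_{i<N} p(W_i)/p̃(W_i)) converges, as N → ∞, to the true risk Σ_{ω∈Ω} p(ω) l(ω). -/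
open MeasureTheory ProbabilityTheory Filter

/-- SLLN specialized to `f ∘ W i` for a finite-valued iid sequence. -/
lemma rent_slln_aux
    {Ω : Type*} [Fintype Ω] [Nonempty Ω] [MeasurableSpace Ω] [MeasurableSingletonClass Ω]
    (ptil : Ω → ℝ)
    {α : Type*} [MeasurableSpace α] (μ : Measure α) [IsProbabilityMeasure μ]
    (W : ℕ → α → Ω) (hmeas : ∀ i, Measurable (W i))
    (hindep : iIndepFun W μ)
    (hdist : ∀ i ω, μ (W i ⁻¹' {ω}) = ENNReal.ofReal (ptil ω))
    (hptil_nonneg : ∀ ω, 0 ≤ ptil ω)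
    (f : Ω → ℝ) :
    ∀ᵐ a ∂μ, Tendsto (fun N : ℕ => (∑ i ∈ Finset.range N, f (W i a)) / N)
      atTop (nhds (∑ ω, ptil ω * f ω)) := by
  have hfm : Measurable f := measurable_of_countable f
  have hmap : ∀ i, μ.map (W i) = μ.map (W 0) := by
    intro i
    apply MeasureTheory.Measure.ext_of_singleton
    intro ω
    rw [Measure.map_apply (hmeas i) (measurableSet_singleton ω),
      Measure.map_apply (hmeas 0) (measurableSet_singleton ω), hdist i ω, hdist 0 ω]
  have hident : ∀ i, IdentDistrib (fun a => f (W i a)) (fun a => f (W 0 a)) μ μ := by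
    intro i
    exact IdentDistrib.comp ⟨(hmeas i).aemeasurable, (hmeas 0).aemeasurable, hmap i⟩ hfm
  have hint : Integrable (fun a => f (W 0 a)) μ := by
    apply Integrable.comp_measurable _ (hmeas 0)
    rw [hmap 0]  -- trivial
    have : IsProbabilityMeasure (μ.map (W 0)) :=
      Measure.isProbabilityMeasure_map (hmeas 0).aemeasurable
    exact .of_finite
  have hpind : Pairwise (Function.onFun (IndepFun · · μ) fun i a => f (W i a)) := by
    intro i j hij
    exact (hindep.indepFun hij).comp hfm hfm
  have hE : (∫ a, f (W 0 a) ∂μ) = ∑ ω, ptil ω * f ω := by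
    rw [← integral_map (hmeas 0).aemeasurable hfm.aestronglyMeasurable]
    rw [integral_fintype (f := f) .of_finite]
    congr 1
    ext ω
    rw [Measure.real_def, Measure.map_apply (hmeas 0) (measurableSet_singleton ω), hdist 0 ω,
      ENNReal.toReal_ofReal]
    · simp [mul_comm]
    · exact hptil_nonneg ω
  have := strong_law_ae_real (fun i a => f (W i a)) hint hpind hident
  rw [hE] at this
  exact this

/-- **Proposition 1 (RENT consistency).** For a nonempty finite type `Ω`, pmfs `ptil` and `p`
on `Ω` with `ptil` everywhere positive, a loss `l : Ω → ℝ`, and an i.i.d. sequence `W` of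
`Ω`-valued random variables each distributed according to `ptil`, the self-normalized
importance-weighted empirical risk converges almost surely to the true risk `∑ ω, p ω * l ω`. -/
theorem rent_self_normalized_consistency
    {Ω : Type*} [Fintype Ω] [Nonempty Ω] [MeasurableSpace Ω] [MeasurableSingletonClass Ω]
    (ptil p : Ω → ℝ)
    (hptil_pos : ∀ ω, 0 < ptil ω) (hptil_sum : ∑ ω, ptil ω = 1)
    (hp_nonneg : ∀ ω, 0 ≤ p ω) (hp_sum : ∑ ω, p ω = 1)
    (l : Ω → ℝ)
    {α : Type*} [MeasurableSpace α] (μ : Measure α) [IsProbabilityMeasure μ]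
    (W : ℕ → α → Ω) (hmeas : ∀ i, Measurable (W i))
    (hindep : iIndepFun W μ)
    (hdist : ∀ i ω, μ (W i ⁻¹' {ω}) = ENNReal.ofReal (ptil ω)) :
    ∀ᵐ a ∂μ, Tendsto (fun N : ℕ =>
        (∑ i ∈ Finset.range N, (p (W i a) / ptil (W i a)) * l (W i a)) /
          (∑ i ∈ Finset.range N, p (W i a) / ptil (W i a)))
      atTop (nhds (∑ ω, p ω * l ω)) := by
  have h1 := rent_slln_aux ptil μ W hmeas hindep hdist (fun ω => (hptil_pos ω).le)
    (fun ω => (p ω / ptil ω) * l ω)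
  have h2 := rent_slln_aux ptil μ W hmeas hindep hdist (fun ω => (hptil_pos ω).le) (fun ω => p ω / ptil ω)
  filter_upwards [h1, h2] with a h1 h2
  have hnum : (∑ ω, ptil ω * (p ω / ptil ω * l ω)) = ∑ ω, p ω * l ω := by
    apply Finset.sum_congr rfl
    intro ω _
    have hne := (hptil_pos ω).ne'
    field_simp
  have hden : (∑ ω, ptil ω * (p ω / ptil ω)) = 1 := by
    rw [← hp_sum]
    apply Finset.sum_congr rfl
    intro ω _
    have hne := (hptil_pos ω).ne'
    field_simp
  rw [hnum] at h1
  rw [hden] at h2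
  have := Tendsto.div h1 h2 one_ne_zero
  rw [div_one] at this
  apply this.congr'
  filter_upwards [eventually_ge_atTop 1] with N hN
  have hN0 : (N : ℝ) ≠ 0 := by positivity
  simp only [Pi.div_apply]
  rw [div_div_div_cancel_right₀ hN0]
end

section
/- Let C be a natural number, let T be an invertible C×C real matrix, let p : Fin C → ℝ, let p̃ = T·p (matrix–vector product), and let l : Fin C → ℝ. Then Σ_{ỹ} p̃(ỹ) · (Σ_{k} l(k) · (T⁻¹)_{k,ỹ}) = Σ_{k} p(k) · l(k). -/
section

open Matrix

variable {n R : Type*} [Fintype n] [DecidableEq n] [CommRing R]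

theorem Matrix.mulVec_dotProduct_vecMul_nonsing_inv {A : Matrix n n R} (hA : IsUnit A)
    (p l : n → R) : (A *ᵥ p) ⬝ᵥ (l ᵥ* A⁻¹) = p ⬝ᵥ l := by
  rw [dotProduct_comm, ← dotProduct_mulVec, mulVec_mulVec,
    nonsing_inv_mul A ((isUnit_iff_isUnit_det A).mp hA), one_mulVec, dotProduct_comm]

end

/-- **Consistency of the Backward risk.** For an invertible `C × C` real transition matrix `T`,
clean label distribution `p`, noisy label distribution `ptil = T·p`, and per-class losses `l`,
the Backward risk `∑ ỹ, ptil ỹ * (l ᵥ* T⁻¹) ỹ` equals the clean risk `∑ k, p k * l k`. -/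
theorem backward_risk_consistency
    (C : ℕ) (T : Matrix (Fin C) (Fin C) ℝ) (hT : IsUnit T)
    (p ptil : Fin C → ℝ) (hptil : ptil = T.mulVec p)
    (l : Fin C → ℝ) :
    ∑ ytil, ptil ytil * (∑ k, l k * T⁻¹ k ytil) = ∑ k, p k * l k := by
  subst hptil
  exact T.mulVec_dotProduct_vecMul_nonsing_inv hT p l
end

section
/- Let T = [[a, b], [c, d]] be a real 2×2 matrix with nonnegative entries whose columns sum to one (a + c = 1 and b + d = 1) and which satisfies a > c, d > b, b > 0, and c > 0. Define g : (0,1) → ℝ by g(p) = −(T⁻¹)_{1,1}·log p − (T⁻¹)_{2,1}·log(1−p). Then g(p) tends to −∞ as p tends to 1 from the left; in particular g is unbounded below on (0,1). -/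
/-! The entry `(T⁻¹)₂₁ = -c / det T` is negative because `det T = ad - bc > 0` when the diagonal
dominates. Hence `g p = -(T⁻¹)₁₁ log p + (c / det T) log (1 - p)`: the first term tends to `0` and
the second to `-∞` as `p → 1⁻`. -/

open Filter Set Topology

theorem Filter.Tendsto.not_bddBelow_image {α β : Type*} [Preorder β] [NoMinOrder β]
    {l : Filter α} [l.NeBot] {f : α → β} {s : Set α} (hf : Tendsto f l atBot) (hs : s ∈ l) :
    ¬BddBelow (f '' s) := by
  rintro ⟨m, hm⟩
  obtain ⟨x, hxm, hxs⟩ := ((hf.eventually (eventually_lt_atBot m)).and hs).exists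
  exact (hm (mem_image_of_mem f hxs)).not_gt hxm

namespace Matrix

variable {R : Type*}

theorem det_fin_two_of_pos [CommRing R] [LinearOrder R] [IsStrictOrderedRing R] {a b c d : R}
    (hb : 0 < b) (hc : 0 < c) (hca : c < a) (hbd : b < d) : 0 < (!![a, b; c, d]).det := by
  rw [det_fin_two_of, sub_pos]
  calc b * c < d * c := mul_lt_mul_of_pos_right hbd hc
    _ < d * a := mul_lt_mul_of_pos_left hca (hb.trans hbd)
    _ = a * d := mul_comm d a

variable [Field R] (a b c d : R)

theorem inv_fin_two_of : (!![a, b; c, d])⁻¹ = (a * d - b * c)⁻¹ • !![d, -b; -c, a] := by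
  rw [inv_def, det_fin_two_of, adjugate_fin_two_of, Ring.inverse_eq_inv]

theorem inv_fin_two_of_apply_one_zero : (!![a, b; c, d])⁻¹ 1 0 = -c / (!![a, b; c, d]).det := by
  simp [inv_fin_two_of, det_fin_two_of, div_eq_inv_mul]

end Matrix

theorem tendsto_mul_log_sub_mul_log_one_sub_nhdsLT_one {α β : ℝ} (hβ : β < 0) :
    Tendsto (fun p => α * Real.log p - β * Real.log (1 - p)) (𝓝[<] 1) atBot := by
  have hlog : Tendsto (fun p => α * Real.log p) (𝓝[<] 1) (𝓝 0) := by
    simpa using ((Real.continuousAt_log one_ne_zero).const_mul α).mono_left nhdsWithin_le_nhds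
  have hone_sub : Tendsto (fun p : ℝ => 1 - p) (𝓝[<] 1) (𝓝[>] 0) := by
    refine tendsto_nhdsWithin_of_tendsto_nhds_of_eventually_within _ ?_ ?_
    · simpa using ((continuous_sub_left (1 : ℝ)).tendsto 1).mono_left nhdsWithin_le_nhds
    · filter_upwards [self_mem_nhdsWithin] with p (hp : p < 1) using sub_pos.mpr hp
  have hlog_one_sub : Tendsto (fun p => -β * Real.log (1 - p)) (𝓝[<] 1) atBot :=
    (Real.tendsto_log_nhdsGT_zero.comp hone_sub).const_mul_atBot (neg_pos.mpr hβ)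
  simpa only [sub_eq_add_neg, neg_mul] using hlog.add_atBot hlog_one_sub

theorem backward_loss_unbounded_below_general
    (a b c d : ℝ)
    (hb : 0 < b) (hc : 0 < c)
    (hac : c < a) (hdb : b < d)
    (g : ℝ → ℝ)
    (hg : ∀ p ∈ Set.Ioo (0 : ℝ) 1,
      g p = -((!![a, b; c, d] : Matrix (Fin 2) (Fin 2) ℝ)⁻¹ 0 0) * Real.log p
            - ((!![a, b; c, d] : Matrix (Fin 2) (Fin 2) ℝ)⁻¹ 1 0) * Real.log (1 - p)) :
    Tendsto g (nhdsWithin 1 (Set.Iio 1)) atBot ∧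
    ¬ BddBelow (g '' Set.Ioo 0 1) := by
  have hIoo : Ioo (0 : ℝ) 1 ∈ 𝓝[<] 1 := Ioo_mem_nhdsLT one_pos
  have hinv : (!![a, b; c, d])⁻¹ 1 0 < 0 := by
    rw [Matrix.inv_fin_two_of_apply_one_zero]
    exact div_neg_of_neg_of_pos (neg_neg_of_pos hc) (Matrix.det_fin_two_of_pos hb hc hac hdb)
  have hlim : Tendsto g (𝓝[<] 1) atBot :=
    (tendsto_mul_log_sub_mul_log_one_sub_nhdsLT_one hinv).congr'
      (eventually_of_mem hIoo fun p hp => (hg p hp).symm)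
  exact ⟨hlim, hlim.not_bddBelow_image hIoo⟩

/-- **Instability of the Backward loss (binary case).** With `T = !![a, b; c, d]` column
stochastic, nonnegative, `a > c`, `d > b`, `b > 0`, `c > 0`, the Backward loss
`g p = −(T⁻¹)₁₁ log p − (T⁻¹)₂₁ log (1 − p)` on `(0,1)` tends to `−∞` as `p → 1⁻`;
in particular `g` is unbounded below on `(0,1)`. -/
theorem backward_loss_unbounded_below
    (a b c d : ℝ)
    (ha : 0 ≤ a) (hd : 0 ≤ d) (hb : 0 < b) (hc : 0 < c)
    (hcol1 : a + c = 1) (hcol2 : b + d = 1)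
    (hac : c < a) (hdb : b < d)
    (g : ℝ → ℝ)
    (hg : ∀ p ∈ Set.Ioo (0 : ℝ) 1,
      g p = -((!![a, b; c, d] : Matrix (Fin 2) (Fin 2) ℝ)⁻¹ 0 0) * Real.log p
            - ((!![a, b; c, d] : Matrix (Fin 2) (Fin 2) ℝ)⁻¹ 1 0) * Real.log (1 - p)) :
    Tendsto g (nhdsWithin 1 (Set.Iio 1)) atBot ∧
    ¬ BddBelow (g '' Set.Ioo 0 1) :=
  backward_loss_unbounded_below_general a b c d hb hc hac hdb g hg
end
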